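/- The natural action of the rotation group SO(3) on the real projective plane ℝP² induces, via acting on the first coordinate of ℝP² × [0,1], a well-defined continuous action of SO(3) on the unreduced suspension Σ(ℝP²), and the orbit space of this action (the quotient of Σ(ℝP²) by the relation identifying points in the same SO(3)-orbit) is homeomorphic to the closed interval [0,1]. -/

import Mathlib

open Matrix

/-- The rotation group `SO(3)`: real `3 × 3` matrices `A` with `AᵀA = 1` and `det A = 1`,
realized as the subgroup of the orthogonal group consisting of matrices of determinant one. -/
def SO3 : Subgroup (Matrix.unitaryGroup (Fin 3) ℝ) where
  carrier := {A | (A : Matrix (Fin 3) (Fin 3) ℝ).det = 1}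
  one_mem' := by simp
  mul_mem' := by
    intro a b ha hb
    simp only [Set.mem_setOf_eq, Matrix.UnitaryGroup.mul_val, Matrix.det_mul] at *
    rw [ha, hb, mul_one]
  inv_mem' := by
    intro a ha
    simp only [Set.mem_setOf_eq, Matrix.UnitaryGroup.inv_val] at *
    rw [Matrix.star_eq_conjTranspose, Matrix.det_conjTranspose, ha, star_one]

lemma SO3.mulVecLin_injective (A : ↥SO3) :
    Function.Injective (Matrix.mulVecLin (A.1.1 : Matrix (Fin 3) (Fin 3) ℝ)) := by
  intro v w h
  simp only [Matrix.mulVecLin_apply] at h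
  have key : ∀ u : Fin 3 → ℝ, (star A.1.1) *ᵥ (A.1.1 *ᵥ u) = u := by
    intro u
    rw [Matrix.mulVec_mulVec, A.1.2.1, Matrix.one_mulVec]
  rw [← key v, ← key w, h]

/-- The natural action of `SO(3)` on the real projective plane `ℝP²` (the projectivization
of `ℝ³`, i.e. the quotient of `ℝ³ ∖ {0}` by nonzero scalar multiplication), induced by the
linear action of `SO(3)` on `ℝ³`. -/
noncomputable instance : MulAction ↥SO3 (Projectivization ℝ (Fin 3 → ℝ)) where
  smul A p := Projectivization.map (Matrix.mulVecLin A.1.1) (SO3.mulVecLin_injective A) p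
  one_smul p := by
    induction p using Projectivization.ind with
    | h v hv =>
      show Projectivization.map _ (SO3.mulVecLin_injective 1) _ = _
      rw [Projectivization.map_mk]
      simp [Matrix.mulVecLin_apply, Matrix.one_mulVec]
  mul_smul A B p := by
    induction p using Projectivization.ind with
    | h v hv =>
      show Projectivization.map _ (SO3.mulVecLin_injective (A * B)) _ =
        Projectivization.map _ (SO3.mulVecLin_injective A)
          (Projectivization.map _ (SO3.mulVecLin_injective B) _)
      rw [Projectivization.map_mk, Projectivization.map_mk, Projectivization.map_mk]
      simp [Matrix.mulVecLin_apply, Matrix.mulVec_mulVec]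

/-- The quotient topology on the real projective plane. -/
instance : TopologicalSpace (Projectivization ℝ (Fin 3 → ℝ)) :=
  inferInstanceAs (TopologicalSpace (Quotient (projectivizationSetoid ℝ (Fin 3 → ℝ))))

/-- The setoid on `Y × [0,1]` whose quotient is the unreduced suspension of `Y`:
`Y × {0}` is collapsed to one point and `Y × {1}` to another. -/
def suspSetoid (Y : Type*) : Setoid (Y × unitInterval) where
  r a b := a = b ∨ (a.2 = 0 ∧ b.2 = 0) ∨ (a.2 = 1 ∧ b.2 = 1)
  iseqv := by
    constructor
    · intro a; exact Or.inl rfl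
    · rintro a b (rfl | ⟨h1, h2⟩ | ⟨h1, h2⟩)
      · exact Or.inl rfl
      · exact Or.inr (Or.inl ⟨h2, h1⟩)
      · exact Or.inr (Or.inr ⟨h2, h1⟩)
    · rintro a b c (rfl | ⟨h1, h2⟩ | ⟨h1, h2⟩) (rfl | ⟨h3, h4⟩ | ⟨h3, h4⟩)
      · exact Or.inl rfl
      · exact Or.inr (Or.inl ⟨h3, h4⟩)
      · exact Or.inr (Or.inr ⟨h3, h4⟩)
      · exact Or.inr (Or.inl ⟨h1, h2⟩)
      · exact Or.inr (Or.inl ⟨h1, h4⟩)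
      · exact absurd (h2.symm.trans h3) (by norm_num [Subtype.ext_iff])
      · exact Or.inr (Or.inr ⟨h1, h2⟩)
      · exact absurd (h2.symm.trans h3) (by norm_num [Subtype.ext_iff])
      · exact Or.inr (Or.inr ⟨h1, h4⟩)

/-- The unreduced suspension of a topological space `Y`: the quotient of `Y × [0,1]`
collapsing `Y × {0}` to one point and `Y × {1}` to another, with the quotient topology. -/
abbrev Susp (Y : Type*) : Type _ := Quotient (suspSetoid Y)


section Aux

noncomputable section

instance : T2Space (Matrix (Fin 3) (Fin 3) ℝ) :=
  inferInstanceAs (T2Space (Fin 3 → Fin 3 → ℝ))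

instance : LocallyCompactSpace (Matrix (Fin 3) (Fin 3) ℝ) :=
  inferInstanceAs (LocallyCompactSpace (Fin 3 → Fin 3 → ℝ))

lemma SO3.isClosedEmbedding :
    Topology.IsClosedEmbedding (fun A : ↥SO3 => (A.1.1 : Matrix (Fin 3) (Fin 3) ℝ)) := by
  refine ⟨⟨Topology.IsInducing.subtypeVal.comp Topology.IsInducing.subtypeVal, ?_⟩, ?_⟩
  · intro A B h
    exact Subtype.ext (Subtype.ext h)
  · have : Set.range (fun A : ↥SO3 => (A.1.1 : Matrix (Fin 3) (Fin 3) ℝ)) =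
        {M | star M * M = 1} ∩ {M | M * star M = 1} ∩ {M | M.det = 1} := by
      ext M
      constructor
      · rintro ⟨A, rfl⟩
        exact ⟨⟨A.1.2.1, A.1.2.2⟩, A.2⟩
      · rintro ⟨⟨h1, h2⟩, h3⟩
        exact ⟨⟨⟨M, h1, h2⟩, h3⟩, rfl⟩
    rw [this]
    refine (IsClosed.inter (IsClosed.inter ?_ ?_) ?_)
    · exact isClosed_eq (continuous_star.matrix_mul continuous_id) continuous_const
    · exact isClosed_eq (continuous_id.matrix_mul continuous_star) continuous_const
    · exact isClosed_eq (Continuous.matrix_det continuous_id) continuous_const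

instance : LocallyCompactSpace ↥SO3 := SO3.isClosedEmbedding.locallyCompactSpace

def ee : Fin 3 → ℝ := fun i => if i = 0 then 1 else 0

lemma ee_ne : ee ≠ 0 := by
  intro h
  have := congrFun h 0
  simp [ee] at this

lemma exists_unitary_det_one (v : Fin 3 → ℝ) (hv : v ≠ 0) :
    ∃ B : Matrix (Fin 3) (Fin 3) ℝ, B ∈ Matrix.unitaryGroup (Fin 3) ℝ ∧ B.det = 1 ∧
      ∃ c : ℝ, c ≠ 0 ∧ B *ᵥ ee = c • v := by
  classical
  set E := EuclideanSpace ℝ (Fin 3)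
  set u₀ : E := (WithLp.equiv 2 (Fin 3 → ℝ)).symm v with hu₀
  have hu₀ne : u₀ ≠ 0 := by intro h; apply hv; simpa [hu₀] using congrArg WithLp.ofLp h
  set u : E := ‖u₀‖⁻¹ • u₀ with hu
  have hnu : ‖u‖ = 1 := by
    rw [hu, norm_smul, norm_inv, norm_norm, inv_mul_cancel₀ (norm_ne_zero_iff.2 hu₀ne)]
  have horth : Orthonormal ℝ (({0} : Set (Fin 3)).restrict (fun _ : Fin 3 => u)) := by
    rw [orthonormal_iff_ite]
    intro i j
    have : i = j := Subtype.ext (i.2.trans j.2.symm)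
    subst this
    simp [real_inner_self_eq_norm_sq, hnu, Set.restrict_apply]
    exact Or.inl hnu
  obtain ⟨b, hb⟩ := horth.exists_orthonormalBasis_extension_of_card_eq
    (by rw [finrank_euclideanSpace_fin]; simp)
  have hb0 : b 0 = u := hb 0 rfl
  set B : Matrix (Fin 3) (Fin 3) ℝ := Matrix.of (fun i j => b j i) with hB
  have hBu : star B * B = 1 := by
    ext i j
    have hbo := b.orthonormal
    rw [orthonormal_iff_ite] at hbo
    have h2 := hbo i j
    rw [PiLp.inner_apply] at h2
    simp only [RCLike.inner_apply, starRingEnd_apply, star_trivial] at h2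
    simp only [Matrix.mul_apply, Matrix.one_apply, Matrix.star_apply, hB, Matrix.of_apply,
      star_trivial]
    rw [← h2]
    exact Finset.sum_congr rfl fun _ _ => mul_comm _ _
  have hBmem : B ∈ Matrix.unitaryGroup (Fin 3) ℝ := Matrix.mem_unitaryGroup_iff'.2 hBu
  have hdet : B.det * B.det = 1 := by
    have := congrArg Matrix.det hBu
    rwa [Matrix.det_mul, Matrix.star_eq_conjTranspose, Matrix.det_conjTranspose, Matrix.det_one]
      at this
  set d : Fin 3 → ℝ := fun i => if i = 0 then B.det else 1 with hd
  have hdd : ∀ i, d i * d i = 1 := by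
    intro i
    by_cases h : i = 0 <;> simp [hd, h, hdet]
  set D : Matrix (Fin 3) (Fin 3) ℝ := Matrix.diagonal d with hD
  have hDu : D ∈ Matrix.unitaryGroup (Fin 3) ℝ := by
    rw [Matrix.mem_unitaryGroup_iff', hD, Matrix.star_eq_conjTranspose,
      Matrix.diagonal_conjTranspose, Matrix.diagonal_mul_diagonal]
    ext i j
    rcases eq_or_ne i j with rfl | h
    · simp [Matrix.diagonal_apply_eq, hdd i]
    · simp [Matrix.diagonal_apply_ne _ h, Matrix.one_apply_ne h]
  have hdetD : D.det = B.det := by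
    simp [hD, Matrix.det_diagonal, Fin.prod_univ_three, hd]
  refine ⟨B * D, mul_mem hBmem hDu, ?_, ?_⟩
  · rw [Matrix.det_mul, hdetD, hdet]
  · refine ⟨B.det * ‖u₀‖⁻¹, ?_, ?_⟩
    · have hBdet : B.det ≠ 0 := by
        intro h; rw [h, zero_mul] at hdet; exact zero_ne_one hdet
      exact mul_ne_zero hBdet (inv_ne_zero (norm_ne_zero_iff.2 hu₀ne))
    · rw [← Matrix.mulVec_mulVec]
      have h1 : D *ᵥ ee = B.det • ee := by
        funext i
        simp only [hD, Matrix.mulVec_diagonal, Pi.smul_apply, smul_eq_mul]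
        by_cases h : i = 0 <;> simp [hd, h, ee]
      rw [h1, Matrix.mulVec_smul]
      have h2 : B *ᵥ ee = ‖u₀‖⁻¹ • v := by
        funext i
        simp only [Matrix.mulVec, dotProduct, hB, Matrix.of_apply]
        rw [Finset.sum_eq_single 0]
        · simp only [ee, hb0, hu, if_true, mul_one]
          norm_num
          rfl
        · intro j _ hj; simp [ee, hj]
        · simp
      rw [h2, smul_smul]

lemma SO3.mulVec_ne_zero (A : ↥SO3) {v : Fin 3 → ℝ} (hv : v ≠ 0) :
    (A.1.1 : Matrix (Fin 3) (Fin 3) ℝ) *ᵥ v ≠ 0 := by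
  intro h
  apply hv
  apply SO3.mulVecLin_injective A
  rw [map_zero]
  simpa [Matrix.mulVecLin_apply] using h

lemma SO3.smul_mk (A : ↥SO3) (v : Fin 3 → ℝ) (hv : v ≠ 0) :
    A • Projectivization.mk ℝ v hv =
      Projectivization.mk ℝ ((A.1.1 : Matrix (Fin 3) (Fin 3) ℝ) *ᵥ v)
        (SO3.mulVec_ne_zero A hv) := by
  show Projectivization.map _ (SO3.mulVecLin_injective A) _ = _
  rw [Projectivization.map_mk]
  rfl

lemma SO3.exists_smul_eq (p : Projectivization ℝ (Fin 3 → ℝ)) :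
    ∃ A : ↥SO3, A • Projectivization.mk ℝ ee ee_ne = p := by
  induction p using Projectivization.ind with
  | h v hv =>
    obtain ⟨B, hBmem, hBdet, c, hc, hBv⟩ := exists_unitary_det_one v hv
    refine ⟨⟨⟨B, hBmem⟩, hBdet⟩, ?_⟩
    rw [SO3.smul_mk]
    rw [Projectivization.mk_eq_mk_iff']
    exact ⟨c, hBv.symm⟩

lemma cont_mk' :
    Continuous (Projectivization.mk' ℝ :
      {v : Fin 3 → ℝ // v ≠ 0} → Projectivization ℝ (Fin 3 → ℝ)) :=
  continuous_quot_mk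

lemma cont_smul_RP2 :
    Continuous (fun q : ↥SO3 × Projectivization ℝ (Fin 3 → ℝ) => q.1 • q.2) := by
  have hq : Topology.IsQuotientMap (Projectivization.mk' ℝ :
      {v : Fin 3 → ℝ // v ≠ 0} → Projectivization ℝ (Fin 3 → ℝ)) :=
    isQuotientMap_quot_mk
  apply hq.continuous_lift_prod_right
  have key : ∀ p : ↥SO3 × {v : Fin 3 → ℝ // v ≠ 0},
      p.1 • Projectivization.mk' ℝ p.2 =
        Projectivization.mk' ℝ ⟨(p.1.1.1 : Matrix (Fin 3) (Fin 3) ℝ) *ᵥ p.2.1,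
          SO3.mulVec_ne_zero p.1 p.2.2⟩ := by
    intro p
    rw [Projectivization.mk'_eq_mk, SO3.smul_mk]
    rfl
  simp only [key]
  exact cont_mk'.comp (Continuous.subtype_mk
    (((continuous_subtype_val.comp continuous_subtype_val).comp continuous_fst).matrix_mulVec
      (continuous_subtype_val.comp continuous_snd)) _)

/-- The suspended action. -/
def actMap (g : ↥SO3) :
    Susp (Projectivization ℝ (Fin 3 → ℝ)) → Susp (Projectivization ℝ (Fin 3 → ℝ)) :=
  Quotient.map (fun a => (g • a.1, a.2))
    (by
      rintro a b (h | ⟨h1, h2⟩ | ⟨h1, h2⟩)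
      · exact Or.inl (by rw [h])
      · exact Or.inr (Or.inl ⟨h1, h2⟩)
      · exact Or.inr (Or.inr ⟨h1, h2⟩))

lemma actMap_mk (g : ↥SO3) (p : Projectivization ℝ (Fin 3 → ℝ)) (t : unitInterval) :
    actMap g (Quotient.mk (suspSetoid _) (p, t)) = Quotient.mk (suspSetoid _) (g • p, t) :=
  rfl

lemma cont_actMap :
    Continuous (fun q : ↥SO3 × Susp (Projectivization ℝ (Fin 3 → ℝ)) => actMap q.1 q.2) := by
  have hq : Topology.IsQuotientMap
      (Quotient.mk (suspSetoid (Projectivization ℝ (Fin 3 → ℝ)))) :=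
    isQuotientMap_quot_mk
  apply hq.continuous_lift_prod_right
  have key : ∀ p : ↥SO3 × (Projectivization ℝ (Fin 3 → ℝ) × unitInterval),
      actMap p.1 (Quotient.mk (suspSetoid _) p.2) =
        Quotient.mk (suspSetoid _) (p.1 • p.2.1, p.2.2) := fun p => rfl
  simp only [key]
  exact continuous_quot_mk.comp
    ((cont_smul_RP2.comp (continuous_fst.prodMk (continuous_fst.comp continuous_snd))).prodMk
      (continuous_snd.comp continuous_snd))

lemma actMap_one (x : Susp (Projectivization ℝ (Fin 3 → ℝ))) : actMap 1 x = x := by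
  induction x using Quotient.ind with
  | _ a =>
    rcases a with ⟨p, t⟩
    rw [show (⟦(p, t)⟧ : Susp (Projectivization ℝ (Fin 3 → ℝ))) =
      Quotient.mk (suspSetoid _) (p, t) from rfl, actMap_mk, one_smul]

lemma actMap_mul (g h : ↥SO3) (x : Susp (Projectivization ℝ (Fin 3 → ℝ))) :
    actMap (g * h) x = actMap g (actMap h x) := by
  induction x using Quotient.ind with
  | _ a =>
    rcases a with ⟨p, t⟩
    rw [show (⟦(p, t)⟧ : Susp (Projectivization ℝ (Fin 3 → ℝ))) =
      Quotient.mk (suspSetoid _) (p, t) from rfl, actMap_mk, actMap_mk, actMap_mk, mul_smul]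

def fS : Susp (Projectivization ℝ (Fin 3 → ℝ)) → unitInterval :=
  Quotient.lift (fun a => a.2)
    (by
      rintro a b (rfl | ⟨h1, h2⟩ | ⟨h1, h2⟩)
      · rfl
      · exact h1.trans h2.symm
      · exact h1.trans h2.symm)

lemma fS_act (g : ↥SO3) (x : Susp (Projectivization ℝ (Fin 3 → ℝ))) :
    fS (actMap g x) = fS x := by
  induction x using Quotient.ind with
  | _ a => rfl

def fQ : Quot (fun x y : Susp (Projectivization ℝ (Fin 3 → ℝ)) =>
    ∃ g : ↥SO3, actMap g x = y) → unitInterval :=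
  Quot.lift fS (by rintro x y ⟨g, rfl⟩; exact (fS_act g x).symm)

def gQ : unitInterval → Quot (fun x y : Susp (Projectivization ℝ (Fin 3 → ℝ)) =>
    ∃ g : ↥SO3, actMap g x = y) :=
  fun t => Quot.mk _ (Quotient.mk (suspSetoid _) (Projectivization.mk ℝ ee ee_ne, t))

lemma gQ_fQ (x : Quot (fun x y : Susp (Projectivization ℝ (Fin 3 → ℝ)) =>
    ∃ g : ↥SO3, actMap g x = y)) : gQ (fQ x) = x := by
  induction x using Quot.ind with
  | _ s =>
    induction s using Quotient.ind with
    | _ a =>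
      rcases a with ⟨p, t⟩
      obtain ⟨A, hA⟩ := SO3.exists_smul_eq p
      refine Quot.sound ⟨A, ?_⟩
      rw [actMap_mk, hA]
      rfl

noncomputable def orbitHomeo :
    Quot (fun x y : Susp (Projectivization ℝ (Fin 3 → ℝ)) =>
      ∃ g : ↥SO3, actMap g x = y) ≃ₜ ↥(Set.Icc (0 : ℝ) 1) where
  toFun := fQ
  invFun := gQ
  left_inv := gQ_fQ
  right_inv := fun t => rfl
  continuous_toFun := continuous_quot_lift _ (Continuous.quotient_lift continuous_snd _)
  continuous_invFun := continuous_quot_mk.comp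
    (continuous_quot_mk.comp (Continuous.prodMk_right (Projectivization.mk ℝ ee ee_ne)))

end

end Aux

/-- **The suspended `SO(3)`-action on `Σ(ℝP²)` has orbit space `[0,1]`.**
The natural `SO(3)`-action on `ℝP²` induces, by acting on the first coordinate, a
well-defined continuous action on the unreduced suspension `Σ(ℝP²)`, and the orbit
space of this action is homeomorphic to the closed interval `[0,1]`. -/
theorem stmt12 :
    ∃ act : ↥SO3 → Susp (Projectivization ℝ (Fin 3 → ℝ)) →
        Susp (Projectivization ℝ (Fin 3 → ℝ)),
      (∀ (g : ↥SO3) (p : Projectivization ℝ (Fin 3 → ℝ)) (t : unitInterval),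
        act g (Quotient.mk (suspSetoid _) (p, t)) = Quotient.mk (suspSetoid _) (g • p, t)) ∧
      Continuous (fun q : ↥SO3 × Susp (Projectivization ℝ (Fin 3 → ℝ)) => act q.1 q.2) ∧
      (∀ x, act 1 x = x) ∧
      (∀ g h x, act (g * h) x = act g (act h x)) ∧
      Nonempty (Quot (fun x y : Susp (Projectivization ℝ (Fin 3 → ℝ)) =>
          ∃ g : ↥SO3, act g x = y) ≃ₜ ↥(Set.Icc (0 : ℝ) 1)) := by
  exact ⟨actMap, actMap_mk, cont_actMap, actMap_one, actMap_mul, ⟨orbitHomeo⟩⟩
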